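/- arXiv:2511.19962 — 2 statements merged into one kernel-verified Lean document; each statement's English description precedes it below -/
import Mathlib

section
/- Let R = k[x_0,...,x_n] be a standard graded polynomial ring and J a graded ideal minimally generated in degrees δ_1 ≤ ... ≤ δ_ℓ with ℓ ≥ 3. Write t_i = min{ j : Tor_i^R(k, J)_j ≠ 0 }. Then for all i ≥ 2, t_i ≥ δ_3 + i. -/
/-!
Nonzero entries of the differentials of a minimal graded resolution lie in the maximal ideal, so
they have positive degree and every column of `F (i + 1) → F i` has a twist strictly larger than
some twist of `F i`; hence the bound propagates from `i = 2` upwards. For `i = 2`: if a second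
syzygy had twist at most `δ₃ + 1`, the first syzygies it involves would have twist at most `δ₃`,
hence only involve the first two generators and be multiples of their Koszul syzygy. The column
of that second syzygy then becomes the boundary of a chain with coefficients in the maximal ideal,
and exactness one step further contradicts minimality.
-/

open MvPolynomial

section MinimalComplex

open Finsupp LinearMap

variable {R : Type*} [CommRing R] (I : Ideal R) {ι κ M : Type*} [AddCommGroup M] [Module R M]

theorem apply_mem_of_forall_single_one_apply_mem {g : (κ →₀ R) →ₗ[R] (ι →₀ R)}
    (hg : ∀ s t, g (single s 1) t ∈ I) (z : κ →₀ R) (t : ι) : g z t ∈ I := by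
  induction z using Finsupp.induction_linear with
  | zero => simp
  | add z₁ z₂ h₁ h₂ => simpa using I.add_mem h₁ h₂
  | single s c =>
    rw [← smul_single_one, map_smul, Finsupp.smul_apply, smul_eq_mul]
    exact I.mul_mem_left c (hg s t)

theorem single_one_sub_notMem_range (hI : I ≠ ⊤) {g : (κ →₀ R) →ₗ[R] (ι →₀ R)}
    (hg : ∀ s t, g (single s 1) t ∈ I) (s : ι) {w : ι →₀ R} (hw : ∀ t, w t ∈ I) :
    single s 1 - w ∉ range g := by
  rintro ⟨z, hz⟩
  have hs := apply_mem_of_forall_single_one_apply_mem I hg z s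
  rw [hz, Finsupp.sub_apply, single_eq_same] at hs
  exact hI ((I.eq_top_iff_one).2 (by simpa using I.add_mem hs (hw s)))

theorem apply_single_one_ne_zero (hI : I ≠ ⊤) {f : (ι →₀ R) →ₗ[R] M}
    {g : (κ →₀ R) →ₗ[R] (ι →₀ R)} (hg : ∀ s t, g (single s 1) t ∈ I)
    (hexact : ker f = range g) (s : ι) : f (single s 1) ≠ 0 := fun h => by
  have hmem : single s 1 - 0 ∈ range g := by rw [sub_zero, ← hexact]; exact h
  exact single_one_sub_notMem_range I hI hg s (fun _ => I.zero_mem) hmem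

theorem exists_preimage_apply_mem_of_mem_span_singleton [Fintype ι]
    {d₀ : (ι →₀ R) →ₗ[R] M} {d₁ : (κ →₀ R) →ₗ[R] (ι →₀ R)} (hexact : ker d₀ = range d₁)
    {τ : M} (hτ : τ ∈ range d₀) (hτfree : ∀ c : R, c • τ = 0 → c = 0)
    {u : ι →₀ R} (hu : d₀ u = 0) (huI : ∀ t, u t ∈ I)
    (hcol : ∀ t, u t ≠ 0 → d₀ (single t 1) ∈ R ∙ τ) :
    ∃ w, d₁ w = u ∧ ∀ j, w j ∈ I := by
  classical
  obtain ⟨x, rfl⟩ := hτ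
  have hlift : ∀ t, ∃ (p : R) (y : κ →₀ R),
      u t ≠ 0 → d₀ (single t 1) = p • d₀ x ∧ d₁ y = single t 1 - p • x := by
    intro t
    by_cases ht : u t = 0
    · exact ⟨0, 0, fun h => (h ht).elim⟩
    obtain ⟨p, hp⟩ := Submodule.mem_span_singleton.1 (hcol t ht)
    have hker : single t 1 - p • x ∈ ker d₀ := by simp [← hp]
    rw [hexact] at hker
    obtain ⟨y, hy⟩ := hker
    exact ⟨p, y, fun _ => ⟨hp.symm, hy⟩⟩
  choose p y hpy using hlift
  -- `∑ uₜ yₜ` lifts `u` up to `(∑ uₜ pₜ) • x`, and that coefficient kills the torsion-free `τ`.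
  have hterm : ∀ t, u t • d₁ (y t) = u t • single t 1 - (u t * p t) • x := by
    intro t
    by_cases ht : u t = 0
    · simp [ht]
    · rw [(hpy t ht).2, smul_sub, smul_smul]
  have hsum : ∑ t, u t * p t = 0 := by
    refine hτfree _ ?_
    have : ∑ t, u t • d₀ (single t 1) = ∑ t, (u t * p t) • d₀ x := by
      refine Finset.sum_congr rfl fun t _ => ?_
      by_cases ht : u t = 0
      · simp [ht]
      · rw [(hpy t ht).1, smul_smul]
    rw [Finset.sum_smul, ← this, ← hu]
    simp_rw [← map_smul, ← map_sum, smul_single_one, univ_sum_single]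
  refine ⟨∑ t, u t • y t, ?_, fun j => ?_⟩
  · simp_rw [map_sum, map_smul, hterm, Finset.sum_sub_distrib, ← Finset.sum_smul, hsum,
      zero_smul, sub_zero, smul_single_one, univ_sum_single]
  · rw [Finset.sum_apply']
    exact I.sum_mem fun t _ => by simpa using I.mul_mem_right (y t j) (huI t)

end MinimalComplex

theorem exists_eq_mul_of_mul_add_mul_eq_zero {R : Type*} [CommRing R] [IsDomain R]
    [DecompositionMonoid R] {A B c₀ c₁ : R} (hAB : IsRelPrime A B) (hB : B ≠ 0)
    (h : c₀ * A + c₁ * B = 0) :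
    ∃ p, c₀ = p * B ∧ c₁ = -(p * A) := by
  obtain ⟨p, hp⟩ : B ∣ c₀ := hAB.symm.dvd_of_dvd_mul_right ⟨-c₁, by linear_combination h⟩
  refine ⟨p, by rw [hp, mul_comm], mul_left_cancel₀ hB ?_⟩
  linear_combination h - A * hp

open Finsupp in
/-- Writing `ε eᵢ₀ = h A` and `ε eᵢ₁ = h B` with `A, B` coprime, `τ` is the Koszul syzygy
`B eᵢ₀ - A eᵢ₁`. -/
theorem exists_syzygy_pair_eq_span_singleton {R ι : Type*} [CommRing R] [IsDomain R]
    [UniqueFactorizationMonoid R] {ε : (ι →₀ R) →ₗ[R] R} {i₀ i₁ : ι} (hi : i₀ ≠ i₁)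
    (h₀ : ε (single i₀ 1) ≠ 0) (h₁ : ε (single i₁ 1) ≠ 0) :
    ∃ τ, ε τ = 0 ∧ (∀ c : R, c • τ = 0 → c = 0) ∧
      ∀ σ : ι →₀ R, (∀ j, j ≠ i₀ → j ≠ i₁ → σ j = 0) → ε σ = 0 → σ ∈ R ∙ τ := by
  classical
  obtain ⟨A, B, h, hAB, hA, hB⟩ :=
    UniqueFactorizationMonoid.exists_reduced_factors _ h₀ (ε (single i₁ 1))
  have hε : ∀ i c, ε (single i c) = c * ε (single i 1) := fun i c => by
    rw [← smul_single_one, map_smul, smul_eq_mul]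
  have hh : h ≠ 0 := by rintro rfl; exact h₀ (by rw [← hA, zero_mul])
  have hB0 : B ≠ 0 := by rintro rfl; exact h₁ (by rw [← hB, mul_zero])
  refine ⟨single i₀ B - single i₁ A, ?_, fun c hc => ?_, fun σ hσ hσε => ?_⟩
  · rw [map_sub, hε i₀ B, hε i₁ A, ← hA, ← hB]; ring
  · simpa [hi, hB0] using congr($hc i₀)
  · have hσ2 : σ = single i₀ (σ i₀) + single i₁ (σ i₁) := by
      ext j
      by_cases hj₀ : j = i₀
      · subst hj₀; simp [hi]
      by_cases hj₁ : j = i₁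
      · subst hj₁; simp [hi]
      simp [hσ j hj₀ hj₁, Ne.symm hj₀, Ne.symm hj₁]
    have hsyz : σ i₀ * A + σ i₁ * B = 0 := by
      refine mul_left_cancel₀ hh ?_
      rw [hσ2, map_add, hε i₀, hε i₁, ← hA, ← hB] at hσε
      linear_combination hσε
    obtain ⟨p, hp₀, hp₁⟩ := exists_eq_mul_of_mul_add_mul_eq_zero hAB hB0 hsyz
    refine Submodule.mem_span_singleton.2 ⟨p, ?_⟩
    rw [hσ2, hp₀, hp₁, smul_sub, smul_single, smul_single, single_neg, smul_eq_mul, smul_eq_mul,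
      sub_eq_add_neg]

theorem MvPolynomial.IsHomogeneous.pos_of_constantCoeff_eq_zero {R σ : Type*} [CommSemiring R]
    {p : MvPolynomial σ R} {e : ℕ} (hp : p.IsHomogeneous e) (hc : constantCoeff p = 0)
    (hne : p ≠ 0) : 0 < e := by
  refine Nat.pos_of_ne_zero fun he => hne ?_
  subst he
  rw [totalDegree_eq_zero_iff_eq_C.1 ((totalDegree_zero_iff_isHomogeneous σ).2 hp),
    ← constantCoeff_eq, hc, C_0]

section Resolution

open Finsupp LinearMap

variable {k σ : Type*} [CommRing k] {r : ℕ → ℕ}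

/-- The differentials are homogeneous of degree zero for the grading of `F i = ⊕ₜ R(-a i t)`. -/
def HasTwists (a : (i : ℕ) → Fin (r i) → ℕ)
    (d : (i : ℕ) → (Fin (r (i + 1)) →₀ MvPolynomial σ k) →ₗ[MvPolynomial σ k]
      (Fin (r i) →₀ MvPolynomial σ k)) : Prop :=
  ∀ i s t, d i (single s 1) t = 0 ∨
    ∃ e : ℕ, (d i (single s 1) t).IsHomogeneous e ∧ a i t + e = a (i + 1) s

def IsMinimal (d : (i : ℕ) → (Fin (r (i + 1)) →₀ MvPolynomial σ k) →ₗ[MvPolynomial σ k]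
      (Fin (r i) →₀ MvPolynomial σ k)) : Prop :=
  ∀ i s t, constantCoeff (d i (single s 1) t) = 0

variable {a : (i : ℕ) → Fin (r i) → ℕ}
  {d : (i : ℕ) → (Fin (r (i + 1)) →₀ MvPolynomial σ k) →ₗ[MvPolynomial σ k]
    (Fin (r i) →₀ MvPolynomial σ k)}

theorem IsMinimal.apply_mem_ker (hmin : IsMinimal d) (i : ℕ) (s : Fin (r (i + 1)))
    (t : Fin (r i)) : d i (single s 1) t ∈ RingHom.ker (constantCoeff : MvPolynomial σ k →+* k) :=
  RingHom.mem_ker.2 (hmin i s t)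

theorem twist_lt_of_apply_ne_zero (hgraded : HasTwists a d) (hmin : IsMinimal d) {i : ℕ}
    {s : Fin (r (i + 1))} {t : Fin (r i)} (h : d i (single s 1) t ≠ 0) : a i t < a (i + 1) s := by
  obtain h0 | ⟨e, he, hsum⟩ := hgraded i s t
  · exact absurd h0 h
  · have := he.pos_of_constantCoeff_eq_zero (hmin i s t) h
    omega

theorem exists_twist_lt [Nontrivial k] (hgraded : HasTwists a d) (hmin : IsMinimal d) {i : ℕ}
    (hexact : ker (d i) = range (d (i + 1))) (s : Fin (r (i + 1))) :
    ∃ t, a i t < a (i + 1) s := by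
  have hne := apply_single_one_ne_zero _ (RingHom.ker_ne_top _) (hmin.apply_mem_ker (i + 1))
    hexact s
  obtain ⟨t, ht⟩ : ∃ t, d i (single s 1) t ≠ 0 := by
    by_contra! h
    exact hne (Finsupp.ext h)
  exact ⟨t, twist_lt_of_apply_ne_zero hgraded hmin ht⟩

theorem le_twist_two [IsDomain k] [UniqueFactorizationMonoid k] (hl : 3 ≤ r 0)
    (hmono : Monotone (a 0))
    {ε : (Fin (r 0) →₀ MvPolynomial σ k) →ₗ[MvPolynomial σ k] MvPolynomial σ k}
    (hgraded : HasTwists a d) (hmin : IsMinimal d) (hexactε : ker ε = range (d 0))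
    (hexact₀ : ker (d 0) = range (d 1)) (hexact₁ : ker (d 1) = range (d 2)) (s : Fin (r 2)) :
    a 0 ⟨2, hl⟩ + 2 ≤ a 2 s := by
  by_contra! hlt
  set I := RingHom.ker (constantCoeff : MvPolynomial σ k →+* k)
  have hI : I ≠ ⊤ := RingHom.ker_ne_top _
  obtain ⟨τ, hτε, hτfree, hsyz⟩ := exists_syzygy_pair_eq_span_singleton
    (i₀ := ⟨0, by omega⟩) (i₁ := ⟨1, by omega⟩) (by simp [Fin.ext_iff])
    (apply_single_one_ne_zero I hI (hmin.apply_mem_ker 0) hexactε _)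
    (apply_single_one_ne_zero I hI (hmin.apply_mem_ker 0) hexactε _)
  set u := d 1 (single s 1)
  have hcol : ∀ t, u t ≠ 0 → d 0 (single t 1) ∈ MvPolynomial σ k ∙ τ := by
    intro t ht
    have hts : a 1 t < a 2 s := twist_lt_of_apply_ne_zero hgraded hmin ht
    refine hsyz _ (fun j hj₀ hj₁ => ?_) ?_
    · by_contra hj
      have hjt : a 0 j < a 1 t := twist_lt_of_apply_ne_zero hgraded hmin hj
      have : j < ⟨2, hl⟩ := hmono.reflect_lt (by omega)
      simp only [ne_eq, Fin.ext_iff, Fin.lt_def] at hj₀ hj₁ this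
      omega
    · rw [← mem_ker, hexactε]
      exact mem_range_self _ _
  obtain ⟨w, hw, hwI⟩ := exists_preimage_apply_mem_of_mem_span_singleton I hexact₀
    (by rw [← hexactε]; exact hτε) hτfree
    (by rw [← mem_ker, hexact₀]; exact mem_range_self _ _) (hmin.apply_mem_ker 1 s) hcol
  exact single_one_sub_notMem_range I hI (hmin.apply_mem_ker 2) s hwI
    (by rw [← hexact₁, mem_ker, map_sub, hw, sub_self])

end Resolution

theorem stmt0 {k : Type} [Field k] {n : ℕ}
    (r : ℕ → ℕ) (a : (i : ℕ) → Fin (r i) → ℕ)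
    -- `J` has at least three minimal generators, of degrees `δ_1 ≤ δ_2 ≤ ⋯`:
    (hl : 3 ≤ r 0) (hmono : Monotone (a 0))
    -- the augmentation `ε : F 0 → J ⊆ R` and the differentials `d i : F (i+1) → F i`:
    (ε : (Fin (r 0) →₀ MvPolynomial (Fin (n + 1)) k) →ₗ[MvPolynomial (Fin (n + 1)) k]
        MvPolynomial (Fin (n + 1)) k)
    (d : (i : ℕ) →
      ((Fin (r (i + 1)) →₀ MvPolynomial (Fin (n + 1)) k) →ₗ[MvPolynomial (Fin (n + 1)) k]
        (Fin (r i) →₀ MvPolynomial (Fin (n + 1)) k)))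
    -- gradedness of the differentials:
    (hgraded : ∀ (i : ℕ) (s : Fin (r (i + 1))) (t : Fin (r i)),
      (d i (Finsupp.single s 1)) t = 0 ∨
        ∃ e : ℕ, ((d i (Finsupp.single s 1)) t).IsHomogeneous e ∧
          a i t + e = a (i + 1) s)
    -- minimality: all entries of the differentials lie in the irrelevant maximal ideal:
    (hmin : ∀ (i : ℕ) (s : Fin (r (i + 1))) (t : Fin (r i)),
      constantCoeff ((d i (Finsupp.single s 1)) t) = 0)
    -- exactness:
    (hexact0 : LinearMap.ker ε = LinearMap.range (d 0))
    (hexact : ∀ i : ℕ, LinearMap.ker (d i) = LinearMap.range (d (i + 1))) :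
    -- `t_i ≥ δ_3 + i` for all `i ≥ 2`:
    ∀ i : ℕ, 2 ≤ i → ∀ s : Fin (r i), a 0 ⟨2, by omega⟩ + i ≤ a i s := by
  intro i hi
  induction i, hi using Nat.le_induction with
  | base => exact le_twist_two hl hmono hgraded hmin hexact0 (hexact 0) (hexact 1)
  | succ m _ ih =>
    intro s
    obtain ⟨t, ht⟩ := exists_twist_lt hgraded hmin (hexact m) s
    have := ih t
    omega
end

section
/- Let f_1, f_2, f_3 be three linearly independent quadratic forms in a polynomial ring R over a field such that the ideal (f_1,f_2,f_3) has height 2 and no two of the f_i form a regular sequence. If no linear form divides all three f_i, then there exist linear forms l_1, l_2 (spanning a 2-dimensional space) with (f_1, f_2, f_3) = (l_1, l_2)^2, or else, if their pairwise gcd's are pairwise linearly independent linear forms l_1, l_2, l_3 that are linearly independent, then (f_1,f_2,f_3) = (l_1,l_2) ∩ (l_2,l_3) ∩ (l_1,l_3). -/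
open MvPolynomial

/-- The height of an ideal: the infimum of the heights (in the prime spectrum) of the
minimal primes over it. -/
noncomputable def idealHeight {S : Type} [CommRing S] (I : Ideal S) : ℕ∞ :=
  sInf {h | ∃ p, ∃ hp : p ∈ I.minimalPrimes,
    h = Order.height (⟨p, hp.1.1⟩ : PrimeSpectrum S)}

/-!
Two independent quadrics that do not form a regular sequence share a prime factor (in the UFD
`k[x₀, …, xₙ]`), and comparing degrees shows that this factor is a linear form. This gives linear
forms `l₁ ∣ f₁, f₂`, `l₂ ∣ f₂, f₃`, `l₃ ∣ f₁, f₃`; since no linear form divides all three `fᵢ`, no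
`lᵢ` divides another, so up to units `f₁ = l₁l₃`, `f₂ = l₁l₂`, `f₃ = l₂l₃`. If the `lᵢ` are
independent, an element of `(l₁,l₂) ∩ (l₂,l₃) ∩ (l₁,l₃)` is a combination of the `lᵢlⱼ` because
`l₁` and `l₂` are nonzerodivisors modulo the prime ideals `(l₂,l₃)` and `(l₁,l₃)`. Otherwise
`l₃ = αl₁ + βl₂` with `αβ ≠ 0`, and then `(l₁l₃, l₁l₂, l₂l₃) = (l₁², l₁l₂, l₂²) = (l₁,l₂)²`.
-/

open RingTheory.Sequence

namespace Ideal

variable {R : Type*} [CommRing R]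

theorem mem_span_triple {a b c w : R} :
    w ∈ span {a, b, c} ↔ ∃ p q r, p * a + q * b + r * c = w := by
  rw [mem_span_insert]
  constructor
  · rintro ⟨p, _, hqr, rfl⟩
    obtain ⟨q, r, rfl⟩ := mem_span_pair.1 hqr
    exact ⟨p, q, r, by ring⟩
  · rintro ⟨p, q, r, rfl⟩
    exact ⟨p, q * b + r * c, mem_span_pair.2 ⟨q, r, rfl⟩, by ring⟩

theorem span_mul_eq_sq_of_eq_add {x y z u v : R} (hu : IsUnit u) (hv : IsUnit v)
    (hz : z = u * x + v * y) :
    span {x * z, x * y, y * z} = span {x, y} ^ 2 := by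
  rw [sq, span_pair_mul_span_pair, mul_comm y x, Set.insert_idem]
  apply le_antisymm <;> rw [span_le] <;> rintro _ (rfl | rfl | rfl) <;>
    simp only [SetLike.mem_coe]
  · exact mem_span_triple.2 ⟨u, v, 0, by rw [hz]; ring⟩
  · exact subset_span (by simp)
  · exact mem_span_triple.2 ⟨0, u, v, by rw [hz]; ring⟩
  · exact (unit_mul_mem_iff_mem _ hu).1 (mem_span_triple.2 ⟨1, -v, 0, by rw [hz]; ring⟩)
  · exact subset_span (by simp)
  · exact (unit_mul_mem_iff_mem _ hv).1 (mem_span_triple.2 ⟨0, -u, 1, by rw [hz]; ring⟩)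

theorem span_mul_eq_inf_of_mul_mem {x y z : R}
    (hx : ∀ a, a * x ∈ span {y, z} → a ∈ span {y, z})
    (hy : ∀ b, b * y ∈ span {x, z} → b ∈ span {x, z}) :
    span {x * z, x * y, y * z} =
      span {x, y} ⊓ span {y, z} ⊓ span {x, z} := by
  apply le_antisymm
  · refine le_inf (le_inf ?_ ?_) ?_ <;> rw [span_le] <;> rintro _ (rfl | rfl | rfl) <;>
      first
      | (apply mul_mem_right; apply subset_span; grind)
      | (apply mul_mem_left; apply subset_span; grind)
  · rintro _ ⟨⟨hxy, hyz⟩, hxz⟩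
    obtain ⟨a, b, rfl⟩ := mem_span_pair.1 hxy
    have ha : a ∈ span {y, z} := hx a <| by
      simpa using sub_mem hyz (mul_mem_left _ b (subset_span (Set.mem_insert y {z})))
    have hb : b ∈ span {x, z} := hy b <| by
      simpa using sub_mem hxz (mul_mem_left _ a (subset_span (Set.mem_insert x {z})))
    obtain ⟨c, d, rfl⟩ := mem_span_pair.1 ha
    obtain ⟨e, f, rfl⟩ := mem_span_pair.1 hb
    exact mem_span_triple.2 ⟨d, c + e, f, by ring⟩

theorem span_triple_eq_of_associated [IsDomain R] {a b c a' b' c' : R} (ha : Associated a a')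
    (hb : Associated b b') (hc : Associated c c') :
    span {a, b, c} = span {a', b', c'} := by
  simp only [span_insert, span_singleton_eq_span_singleton.2 ha,
    span_singleton_eq_span_singleton.2 hb, span_singleton_eq_span_singleton.2 hc]

end Ideal

theorem isRegular_pair_of_no_prime_factors {R : Type*} [CommRing R] [IsDomain R]
    [UniqueFactorizationMonoid R] {f g : R} (hf : f ≠ 0)
    (hfg : ∀ ⦃d⦄, d ∣ f → d ∣ g → ¬Prime d) (hspan : Ideal.span {f, g} ≠ ⊤) :
    IsRegular R [f, g] where
  toIsWeaklyRegular := by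
    refine (isWeaklyRegular_cons_iff R f [g]).2
      ⟨.of_ne_zero hf, (isWeaklyRegular_singleton_iff _ g).2 ?_⟩
    refine (isSMulRegular_quotient_iff_mem_of_smul_mem _ _).2 fun x hx => ?_
    obtain ⟨y, -, hy⟩ := (Submodule.mem_smul_pointwise_iff_exists _ _ _).1 hx
    obtain ⟨z, rfl⟩ :=
      UniqueFactorizationMonoid.dvd_of_dvd_mul_left_of_no_prime_factors hf hfg
        ⟨y, by rw [mul_comm]; exact hy.symm⟩
    exact (Submodule.mem_smul_pointwise_iff_exists _ _ _).2 ⟨z, trivial, rfl⟩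
  top_ne_smul := by
    rw [Ideal.smul_eq_mul, Ideal.mul_top, ne_comm]
    simpa [Ideal.span_insert] using hspan

theorem LinearIndependent.pair_of_ne {K ι V : Type*} [Ring K] [AddCommGroup V] [Module K V]
    {v : ι → V} (hv : LinearIndependent K v) {i j : ι} (hij : i ≠ j) :
    LinearIndependent K ![v i, v j] :=
  LinearIndependent.pair_iff.2 ((LinearIndepOn.pair_iff v hij).1 (hv.linearIndepOn _))

namespace MvPolynomial

section Grading

variable {R σ : Type*} [CommRing R]

/-- Sends `X i` to `X i • T`, so that the coefficient of `T ^ d` is the degree-`d` component;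
a factorization of a homogeneous polynomial then becomes one of a monomial in `T`. -/
noncomputable def toPolynomialByDegree : MvPolynomial σ R →ₐ[R] Polynomial (MvPolynomial σ R) :=
  aeval fun i => Polynomial.C (X i) * Polynomial.X

lemma toPolynomialByDegree_monomial (m : σ →₀ ℕ) (c : R) :
    toPolynomialByDegree (monomial m c) = Polynomial.monomial m.degree (monomial m c) := by
  classical
  rw [toPolynomialByDegree, aeval_monomial, Finsupp.prod]
  simp_rw [mul_pow, Finset.prod_mul_distrib, ← map_pow, ← map_prod, Finset.prod_pow_eq_pow_sum,
    ← Finsupp.degree_apply]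
  rw [← Polynomial.C_mul_X_pow_eq_monomial, ← mul_assoc, Polynomial.algebraMap_apply, ← map_mul,
    ← Finsupp.prod, monomial_eq, algebraMap_eq]

lemma coeff_toPolynomialByDegree (p : MvPolynomial σ R) (d : ℕ) :
    (toPolynomialByDegree p).coeff d = homogeneousComponent d p := by
  classical
  induction p using MvPolynomial.induction_on' with
  | monomial m c =>
    ext e
    rw [toPolynomialByDegree_monomial, Polynomial.coeff_monomial, coeff_homogeneousComponent,
      coeff_monomial]
    split_ifs <;> aesop
  | add p q hp hq => rw [map_add, Polynomial.coeff_add, hp, hq, map_add]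

lemma IsHomogeneous.toPolynomialByDegree_eq {p : MvPolynomial σ R} {n : ℕ}
    (hp : p.IsHomogeneous n) :
    toPolynomialByDegree p = Polynomial.monomial n p := by
  ext1 d
  rw [coeff_toPolynomialByDegree, Polynomial.coeff_monomial,
    homogeneousComponent_of_mem ((mem_homogeneousSubmodule n p).2 hp)]
  simp only [eq_comm]

lemma isHomogeneous_of_natTrailingDegree_eq_natDegree {p : MvPolynomial σ R}
    (h : (toPolynomialByDegree p).natTrailingDegree = (toPolynomialByDegree p).natDegree) :
    p.IsHomogeneous (toPolynomialByDegree p).natDegree := by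
  intro m hm
  show Finsupp.weight (fun _ ↦ 1) m = _
  rw [← Finsupp.degree_eq_weight_one]
  by_contra hdeg
  have : (toPolynomialByDegree p).coeff m.degree = 0 := by
    rcases lt_or_gt_of_ne hdeg with hlt | hgt
    · exact Polynomial.coeff_eq_zero_of_lt_natTrailingDegree (h ▸ hlt)
    · exact Polynomial.coeff_eq_zero_of_natDegree_lt hgt
  simpa [coeff_toPolynomialByDegree, coeff_homogeneousComponent, hm] using congrArg (coeff m) this

theorem IsHomogeneous.exists_isHomogeneous_of_mul_eq [IsDomain R] {p q r : MvPolynomial σ R}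
    {n : ℕ} (hp : p.IsHomogeneous n) (hp0 : p ≠ 0) (h : p = q * r) :
    ∃ a b, a + b = n ∧ q.IsHomogeneous a ∧ r.IsHomogeneous b := by
  classical
  have hqr : toPolynomialByDegree q * toPolynomialByDegree r = Polynomial.monomial n p := by
    rw [← map_mul, ← h, hp.toPolynomialByDegree_eq]
  have hqr0 : toPolynomialByDegree q * toPolynomialByDegree r ≠ 0 := by
    rwa [hqr, Ne, Polynomial.monomial_eq_zero_iff]
  have hq0 := left_ne_zero_of_mul hqr0
  have hr0 := right_ne_zero_of_mul hqr0
  have hdeg := Polynomial.natDegree_mul hq0 hr0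
  have htrail := Polynomial.natTrailingDegree_mul hq0 hr0
  rw [hqr, Polynomial.natDegree_monomial, if_neg hp0] at hdeg
  rw [hqr, Polynomial.natTrailingDegree_monomial hp0] at htrail
  have hq := Polynomial.natTrailingDegree_le_natDegree (p := toPolynomialByDegree q)
  have hr := Polynomial.natTrailingDegree_le_natDegree (p := toPolynomialByDegree r)
  exact ⟨_, _, hdeg.symm, isHomogeneous_of_natTrailingDegree_eq_natDegree (by omega),
    isHomogeneous_of_natTrailingDegree_eq_natDegree (by omega)⟩

theorem IsHomogeneous.exists_C_mul_eq_of_dvd [IsDomain R] {p q : MvPolynomial σ R} {n : ℕ}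
    (hp : p.IsHomogeneous n) (hq : q.IsHomogeneous n) (h : q ∣ p) : ∃ c, p = C c * q := by
  obtain ⟨r, rfl⟩ := h
  by_cases hp0 : q * r = 0
  · exact ⟨0, by rw [hp0, map_zero, zero_mul]⟩
  obtain ⟨a, b, hab, hqa, hrb⟩ := hp.exists_isHomogeneous_of_mul_eq hp0 rfl
  obtain rfl : b = 0 := by have := hqa.inj_right hq (left_ne_zero_of_mul hp0); omega
  exact ⟨r.coeff 0, by
    rw [mul_comm, ← totalDegree_eq_zero_iff_eq_C.1 ((totalDegree_zero_iff_isHomogeneous _).2 hrb)]⟩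

end Grading

variable {k σ : Type*} [Field k]

theorem isUnit_of_isHomogeneous_zero {p : MvPolynomial σ k} (hp : p.IsHomogeneous 0)
    (hp0 : p ≠ 0) : IsUnit p := by
  rw [totalDegree_eq_zero_iff_eq_C.1 ((totalDegree_zero_iff_isHomogeneous _).2 hp)] at hp0 ⊢
  exact (Ne.isUnit (by simpa using hp0)).map C

theorem exists_prime_dvd_of_not_isRegular {f g : MvPolynomial σ k}
    (hf : f.IsHomogeneous 2) (hg : g.IsHomogeneous 2) (hfg : LinearIndependent k ![f, g])
    (hreg : ¬ IsRegular (MvPolynomial σ k) [f, g]) :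
    ∃ l, Prime l ∧ l.IsHomogeneous 1 ∧ l ∣ f ∧ l ∣ g := by
  have hf0 : f ≠ 0 := hfg.ne_zero 0
  have hspan : Ideal.span {f, g} ≠ ⊤ := by
    refine ne_top_of_le_ne_top (RingHom.ker_ne_top (constantCoeff (R := k) (σ := σ)))
      (Ideal.span_le.2 ?_)
    rintro _ (rfl | rfl) <;> simp [constantCoeff_eq, hf.coeff_eq_zero, hg.coeff_eq_zero]
  obtain ⟨p, hpf, hpg, hp⟩ : ∃ p, p ∣ f ∧ p ∣ g ∧ Prime p := by
    by_contra! h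
    exact hreg (isRegular_pair_of_no_prime_factors hf0 (fun d => h d) hspan)
  obtain ⟨q, hq⟩ := hpf
  obtain ⟨a, b, hab, hpa, -⟩ := hf.exists_isHomogeneous_of_mul_eq hf0 hq
  have ha : a ≤ 2 := by omega
  interval_cases a
  · exact absurd (isUnit_of_isHomogeneous_zero hpa hp.ne_zero) hp.not_isUnit
  · exact ⟨p, hp, hpa, ⟨q, hq⟩, hpg⟩
  · -- a common quadratic factor would make `f` and `g` proportional
    obtain ⟨c, rfl⟩ := hf.exists_C_mul_eq_of_dvd hpa ⟨q, hq⟩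
    obtain ⟨d, rfl⟩ := hg.exists_C_mul_eq_of_dvd hpa hpg
    obtain ⟨-, hc⟩ := LinearIndependent.pair_iff.1 hfg d (-c) (by
      simp only [smul_eq_C_mul, map_neg]; ring)
    simp [neg_eq_zero.1 hc] at hf0

theorem associated_mul_of_dvd {f l l' : MvPolynomial σ k} (hf : f.IsHomogeneous 2)
    (hf0 : f ≠ 0) (hl : l.IsHomogeneous 1) (hl' : l'.IsHomogeneous 1) (hlp : Prime l)
    (hll' : ¬ l ∣ l') (hlf : l ∣ f) (hl'f : l' ∣ f) : Associated (l * l') f := by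
  obtain ⟨q, rfl⟩ := hl'f
  have hlq : l ∣ q := (hlp.dvd_or_dvd hlf).resolve_left hll'
  obtain ⟨c, hc⟩ :=
    hf.exists_C_mul_eq_of_dvd (hl.mul hl') (mul_comm l' q ▸ mul_dvd_mul_right hlq l')
  have hc0 : c ≠ 0 := by rintro rfl; simp [hc] at hf0
  rw [hc]
  exact (associated_unit_mul_left _ _ ((Ne.isUnit hc0).map C)).symm

theorem mem_ideal_span_of_mul_mem {s : Set (MvPolynomial σ k)}
    (hs : ∀ l ∈ s, l.IsHomogeneous 1) {l a : MvPolynomial σ k} (hl : l.IsHomogeneous 1)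
    (hls : l ∉ Submodule.span k s) (ha : a * l ∈ Ideal.span s) : a ∈ Ideal.span s := by
  set N := Submodule.span k s
  obtain ⟨π, hπ⟩ := N.subtype.exists_leftInverse_of_injective N.ker_subtype
  set P : MvPolynomial σ k →ₗ[k] MvPolynomial σ k := N.subtype ∘ₗ π
  have hP : ∀ x ∈ N, P x = x := fun x hx => by
    simpa [P] using congrArg Subtype.val (LinearMap.congr_fun hπ ⟨x, hx⟩)
  have hPs : ∀ x, P x ∈ Ideal.span s := fun x => Submodule.span_le_restrictScalars k _ s (π x).2
  -- `F` is the identity modulo `(s)`, kills `s` (as `P` fixes `span k s`) and does not kill `l`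
  let F : MvPolynomial σ k →ₐ[k] MvPolynomial σ k := aeval fun i => X i - P (X i)
  have hF : ∀ x, x - F x ∈ Ideal.span s := by
    have : (Ideal.Quotient.mkₐ k (Ideal.span s)).comp F = Ideal.Quotient.mkₐ k _ :=
      algHom_ext fun i => by simpa [F, Ideal.Quotient.eq_zero_iff_mem] using hPs (X i)
    exact fun x => Ideal.Quotient.eq.1 (AlgHom.congr_fun this x).symm
  have hFP : ∀ x, x.IsHomogeneous 1 → F x = x - P x := by
    intro x hx
    rw [← mem_homogeneousSubmodule, homogeneousSubmodule_one_eq_span_X] at hx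
    refine LinearMap.eqOn_span' (f := F.toLinearMap) (g := LinearMap.id - P) ?_ hx
    rintro _ ⟨i, rfl⟩
    simp [F]
  have hFs : Ideal.span s ≤ RingHom.ker F := Ideal.span_le.2 fun x hx => by
    simp [hFP x (hs x hx), hP x (Submodule.subset_span hx)]
  have hFl : F l ≠ 0 := by
    rw [hFP l hl, sub_ne_zero]
    exact fun h => hls (h ▸ (π l).2)
  have hFa : F a = 0 :=
    (mul_eq_zero.1 (by rw [← map_mul]; exact hFs ha)).resolve_right hFl
  simpa [hFa] using hF a

theorem exists_eq_C_mul_add_C_mul_of_not_linearIndependent {l₁ l₂ l₃ : MvPolynomial σ k}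
    (h₁₂ : LinearIndependent k ![l₁, l₂]) (h : ¬ LinearIndependent k ![l₁, l₂, l₃])
    (h₁₃ : ¬ l₁ ∣ l₃) (h₂₃ : ¬ l₂ ∣ l₃) :
    ∃ α β : k, α ≠ 0 ∧ β ≠ 0 ∧ l₃ = C α * l₁ + C β * l₂ := by
  have hl₃ : l₃ ∈ Submodule.span k {l₁, l₂} := by
    by_contra hl₃
    refine h ?_
    simpa using linearIndependent_finSnoc.2 ⟨h₁₂, (by simpa [Set.pair_comm] using hl₃ :
      l₃ ∉ Submodule.span k (Set.range ![l₁, l₂]))⟩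
  obtain ⟨α, β, hαβ⟩ := Submodule.mem_span_pair.1 hl₃
  simp only [smul_eq_C_mul] at hαβ
  refine ⟨α, β, ?_, ?_, hαβ.symm⟩
  · rintro rfl
    exact h₂₃ ⟨C β, by rw [← hαβ]; simp [mul_comm]⟩
  · rintro rfl
    exact h₁₃ ⟨C α, by rw [← hαβ]; simp [mul_comm]⟩

theorem span_mul_eq_inf_of_linearIndependent {l₁ l₂ l₃ : MvPolynomial σ k}
    (h₁ : l₁.IsHomogeneous 1) (h₂ : l₂.IsHomogeneous 1) (h₃ : l₃.IsHomogeneous 1)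
    (h : LinearIndependent k ![l₁, l₂, l₃]) :
    Ideal.span {l₁ * l₃, l₁ * l₂, l₂ * l₃} =
      Ideal.span {l₁, l₂} ⊓ Ideal.span {l₂, l₃} ⊓ Ideal.span {l₁, l₃} := by
  have hs : ∀ {x y : MvPolynomial σ k}, x.IsHomogeneous 1 → y.IsHomogeneous 1 →
      ∀ l ∈ ({x, y} : Set _), l.IsHomogeneous 1 := by
    rintro x y hx hy _ (rfl | rfl) <;> assumption
  refine Ideal.span_mul_eq_inf_of_mul_mem
    (fun a ha => mem_ideal_span_of_mul_mem (hs h₂ h₃) h₁ ?_ ha)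
    (fun b hb => mem_ideal_span_of_mul_mem (hs h₁ h₃) h₂ ?_ hb)
  · simpa [Set.image_insert_eq] using h.notMem_span_image (s := {1, 2}) (x := 0) (by decide)
  · simpa [Set.image_insert_eq] using h.notMem_span_image (s := {0, 2}) (x := 1) (by decide)

theorem span_mul_eq_sq_or_eq_inf {l₁ l₂ l₃ : MvPolynomial σ k} (h₁ : l₁.IsHomogeneous 1)
    (h₂ : l₂.IsHomogeneous 1) (h₃ : l₃.IsHomogeneous 1) (hl₁ : l₁ ≠ 0) (h₁₂ : ¬ l₁ ∣ l₂)
    (h₁₃ : ¬ l₁ ∣ l₃) (h₂₃ : ¬ l₂ ∣ l₃) :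
    LinearIndependent k ![l₁, l₂] ∧
        Ideal.span {l₁ * l₃, l₁ * l₂, l₂ * l₃} = Ideal.span {l₁, l₂} ^ 2 ∨
      LinearIndependent k ![l₁, l₂, l₃] ∧ Ideal.span {l₁ * l₃, l₁ * l₂, l₂ * l₃} =
        Ideal.span {l₁, l₂} ⊓ Ideal.span {l₂, l₃} ⊓ Ideal.span {l₁, l₃} := by
  by_cases hind : LinearIndependent k ![l₁, l₂, l₃]
  · exact Or.inr ⟨hind, span_mul_eq_inf_of_linearIndependent h₁ h₂ h₃ hind⟩
  have hind₁₂ : LinearIndependent k ![l₁, l₂] := (LinearIndependent.pair_iff' hl₁).2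
    fun a h => h₁₂ ⟨C a, by rw [← h, smul_eq_C_mul, mul_comm]⟩
  obtain ⟨α, β, hα, hβ, hl₃⟩ :=
    exists_eq_C_mul_add_C_mul_of_not_linearIndependent hind₁₂ hind h₁₃ h₂₃
  exact Or.inl ⟨hind₁₂,
    Ideal.span_mul_eq_sq_of_eq_add ((Ne.isUnit hα).map C) ((Ne.isUnit hβ).map C) hl₃⟩

end MvPolynomial

theorem stmt11_general {k : Type} [Field k] {n : ℕ}
    (f₁ f₂ f₃ : MvPolynomial (Fin (n + 1)) k)
    (h₁ : f₁.IsHomogeneous 2) (h₂ : f₂.IsHomogeneous 2) (h₃ : f₃.IsHomogeneous 2)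
    (hli : LinearIndependent k ![f₁, f₂, f₃])
    -- no two of the `fᵢ` form a regular sequence:
    (hnoreg : ∀ g h : MvPolynomial (Fin (n + 1)) k,
      g ∈ ({f₁, f₂, f₃} : Set (MvPolynomial (Fin (n + 1)) k)) →
      h ∈ ({f₁, f₂, f₃} : Set (MvPolynomial (Fin (n + 1)) k)) → g ≠ h →
      ¬ RingTheory.Sequence.IsRegular (MvPolynomial (Fin (n + 1)) k) [g, h])
    -- no linear form divides all three:
    (hnogcd : ¬ ∃ l : MvPolynomial (Fin (n + 1)) k,
      l ≠ 0 ∧ l.IsHomogeneous 1 ∧ l ∣ f₁ ∧ l ∣ f₂ ∧ l ∣ f₃) :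
    (∃ l₁ l₂ : MvPolynomial (Fin (n + 1)) k,
      l₁.IsHomogeneous 1 ∧ l₂.IsHomogeneous 1 ∧ LinearIndependent k ![l₁, l₂] ∧
      Ideal.span {f₁, f₂, f₃} = (Ideal.span {l₁, l₂}) ^ 2) ∨
    (∃ l₁ l₂ l₃ : MvPolynomial (Fin (n + 1)) k,
      l₁.IsHomogeneous 1 ∧ l₂.IsHomogeneous 1 ∧ l₃.IsHomogeneous 1 ∧
      LinearIndependent k ![l₁, l₂, l₃] ∧
      l₁ ∣ f₁ ∧ l₁ ∣ f₂ ∧ l₂ ∣ f₂ ∧ l₂ ∣ f₃ ∧ l₃ ∣ f₁ ∧ l₃ ∣ f₃ ∧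
      Ideal.span {f₁, f₂, f₃} =
        Ideal.span {l₁, l₂} ⊓ Ideal.span {l₂, l₃} ⊓ Ideal.span {l₁, l₃}) := by
  have hf : ∀ i, (![f₁, f₂, f₃] i).IsHomogeneous 2 ∧
      ![f₁, f₂, f₃] i ∈ ({f₁, f₂, f₃} : Set _) := by
    intro i; fin_cases i <;> simp [h₁, h₂, h₃]
  have hpair : ∀ i j : Fin 3, i ≠ j → ∃ l : MvPolynomial (Fin (n + 1)) k, Prime l ∧
      l.IsHomogeneous 1 ∧ l ∣ ![f₁, f₂, f₃] i ∧ l ∣ ![f₁, f₂, f₃] j := fun i j hij =>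
    exists_prime_dvd_of_not_isRegular (hf i).1 (hf j).1 (hli.pair_of_ne hij)
      (hnoreg _ _ (hf i).2 (hf j).2 (hli.injective.ne hij))
  obtain ⟨l₁, hl₁, hl₁', hl₁f₁, hl₁f₂⟩ := hpair 0 1 (by decide)
  obtain ⟨l₂, hl₂, hl₂', hl₂f₂, hl₂f₃⟩ := hpair 1 2 (by decide)
  obtain ⟨l₃, hl₃, hl₃', hl₃f₁, hl₃f₃⟩ := hpair 0 2 (by decide)
  have h₁₂ : ¬ l₁ ∣ l₂ := fun h => hnogcd ⟨l₁, hl₁.ne_zero, hl₁', hl₁f₁, hl₁f₂, h.trans hl₂f₃⟩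
  have h₁₃ : ¬ l₁ ∣ l₃ := fun h => hnogcd ⟨l₁, hl₁.ne_zero, hl₁', hl₁f₁, hl₁f₂, h.trans hl₃f₃⟩
  have h₂₃ : ¬ l₂ ∣ l₃ := fun h => hnogcd ⟨l₂, hl₂.ne_zero, hl₂', h.trans hl₃f₁, hl₂f₂, hl₂f₃⟩
  have hspan : Ideal.span {f₁, f₂, f₃} = Ideal.span {l₁ * l₃, l₁ * l₂, l₂ * l₃} :=
    (Ideal.span_triple_eq_of_associated
      (associated_mul_of_dvd h₁ (hli.ne_zero 0) hl₁' hl₃' hl₁ h₁₃ hl₁f₁ hl₃f₁)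
      (associated_mul_of_dvd h₂ (hli.ne_zero 1) hl₁' hl₂' hl₁ h₁₂ hl₁f₂ hl₂f₂)
      (associated_mul_of_dvd h₃ (hli.ne_zero 2) hl₂' hl₃' hl₂ h₂₃ hl₂f₃ hl₃f₃)).symm
  rcases span_mul_eq_sq_or_eq_inf hl₁' hl₂' hl₃' hl₁.ne_zero h₁₂ h₁₃ h₂₃ with
    ⟨hind, heq⟩ | ⟨hind, heq⟩
  · exact Or.inl ⟨l₁, l₂, hl₁', hl₂', hind, hspan.trans heq⟩
  · exact Or.inr ⟨l₁, l₂, l₃, hl₁', hl₂', hl₃', hind, hl₁f₁, hl₁f₂, hl₂f₂, hl₂f₃, hl₃f₁, hl₃f₃,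
      hspan.trans heq⟩

theorem stmt11 {k : Type} [Field k] {n : ℕ}
    (f₁ f₂ f₃ : MvPolynomial (Fin (n + 1)) k)
    (h₁ : f₁.IsHomogeneous 2) (h₂ : f₂.IsHomogeneous 2) (h₃ : f₃.IsHomogeneous 2)
    (hli : LinearIndependent k ![f₁, f₂, f₃])
    (hht : idealHeight (Ideal.span {f₁, f₂, f₃}) = 2)
    -- no two of the `fᵢ` form a regular sequence:
    (hnoreg : ∀ g h : MvPolynomial (Fin (n + 1)) k,
      g ∈ ({f₁, f₂, f₃} : Set (MvPolynomial (Fin (n + 1)) k)) →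
      h ∈ ({f₁, f₂, f₃} : Set (MvPolynomial (Fin (n + 1)) k)) → g ≠ h →
      ¬ RingTheory.Sequence.IsRegular (MvPolynomial (Fin (n + 1)) k) [g, h])
    -- no linear form divides all three:
    (hnogcd : ¬ ∃ l : MvPolynomial (Fin (n + 1)) k,
      l ≠ 0 ∧ l.IsHomogeneous 1 ∧ l ∣ f₁ ∧ l ∣ f₂ ∧ l ∣ f₃) :
    (∃ l₁ l₂ : MvPolynomial (Fin (n + 1)) k,
      l₁.IsHomogeneous 1 ∧ l₂.IsHomogeneous 1 ∧ LinearIndependent k ![l₁, l₂] ∧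
      Ideal.span {f₁, f₂, f₃} = (Ideal.span {l₁, l₂}) ^ 2) ∨
    (∃ l₁ l₂ l₃ : MvPolynomial (Fin (n + 1)) k,
      l₁.IsHomogeneous 1 ∧ l₂.IsHomogeneous 1 ∧ l₃.IsHomogeneous 1 ∧
      LinearIndependent k ![l₁, l₂, l₃] ∧
      l₁ ∣ f₁ ∧ l₁ ∣ f₂ ∧ l₂ ∣ f₂ ∧ l₂ ∣ f₃ ∧ l₃ ∣ f₁ ∧ l₃ ∣ f₃ ∧
      Ideal.span {f₁, f₂, f₃} =
        Ideal.span {l₁, l₂} ⊓ Ideal.span {l₂, l₃} ⊓ Ideal.span {l₁, l₃}) :=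
  stmt11_general f₁ f₂ f₃ h₁ h₂ h₃ hli hnoreg hnogcd
end
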